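/- Let G = {(x,y) ∈ ℝ² : sin(2πx)·sin(2πy) = 0} (the grid of all horizontal and vertical lines with coordinate in (1/2)ℤ). If T > 0 and γ ∈ H¹([0,T];ℝ²) satisfies γ(t) ∈ G for every t ∈ [0,T], then the length of γ satisfies ∫₀ᵀ|γ'(t)|dt ≥ |γ₁(T) − γ₁(0)| + |γ₂(T) − γ₂(0)|, i.e. the length of a curve lying in the grid is at least the ℓ¹ distance between its endpoints. -/

import Mathlib

open MeasureTheory Filter
open scoped ENNReal Topology

noncomputable section

abbrev Euc (n : ℕ) : Type := EuclideanSpace ℝ (Fin n)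

/-- `u` is an `H¹` curve on `[a,b]` with (a.e.) derivative `u'`. -/
def IsH1On {n : ℕ} (u u' : ℝ → Euc n) (a b : ℝ) : Prop :=
  IntervalIntegrable u' volume a b ∧
  IntervalIntegrable (fun t => ‖u' t‖ ^ 2) volume a b ∧
  ∀ t ∈ Set.Icc a b, u t = u a + ∫ s in a..t, u' s

/-- The localized homogenization energy `ψ_T^z(w)` (value `⊤` if no admissible curve exists). -/
def psiT {n : ℕ} {α : Type*} (φ : Euc n → α) (z : α) (T : ℝ) (w : Euc n) : ℝ≥0∞ :=
  ENNReal.ofReal (1 / T) *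
    sInf {e : ℝ≥0∞ | ∃ u u' : ℝ → Euc n, IsH1On u u' 0 T ∧
      (∀ t ∈ Set.Icc (0 : ℝ) T, φ (u t) = z) ∧
      ‖u 0‖ ≤ Real.sqrt (n : ℝ) ∧ ‖u T - T • w‖ ≤ Real.sqrt (n : ℝ) ∧
      e = ENNReal.ofReal (∫ t in (0 : ℝ)..T, ‖u' t‖ ^ 2)}

/-- The grid `G = {sin(2πx)·sin(2πy) = 0}`, i.e. the union of all horizontal and
vertical lines with a coordinate in `(1/2)ℤ`. -/
def gridG : Set (Euc 2) :=
  {p : Euc 2 | Real.sin (2 * Real.pi * p 0) * Real.sin (2 * Real.pi * p 1) = 0}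


/-! At almost every time `t` at which `γ t` lies on a vertical line `{x ∈ (1/2)ℤ}`, `t` is an
accumulation point of such times (the isolated ones are countable), so the derivative of
`sin (2π γ₁)` vanishes at `t`; since `cos (2π γ₁ t) = ±1` there, `γ₁' t = 0`. The same holds for
horizontal lines, hence a.e. one coordinate of `γ'` vanishes, `|γ₁'| + |γ₂'| ≤ ‖γ'‖` a.e., and
integrating gives the bound. -/

open Set intervalIntegral

theorem ae_accPt_of_mem {α : Type*} [LinearOrder α] [TopologicalSpace α] [OrderTopology α]
    [SecondCountableTopology α] [MeasurableSpace α] (μ : Measure α) [NullSingletonClass μ]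
    (s : Set α) : ∀ᵐ x ∂μ, x ∈ s → AccPt x (𝓟 s) := by
  refine measure_mono_null (fun x hx => ?_)
    ((countable_setOfPred_isolated_right_within (s := s)).measure_zero μ)
  obtain ⟨hxs, hnot⟩ := Classical.not_imp.1 hx
  refine ⟨hxs, ?_⟩
  by_contra hne
  exact hnot (accPt_principal_iff_nhdsWithin.2 ((neBot_iff.2 hne).mono
    (nhdsWithin_mono _ fun y hy => ⟨hy.1, ne_of_gt hy.2⟩)))

theorem HasDerivAt.eq_zero_of_accPt_of_eqOn_const {𝕜 F : Type*} [NontriviallyNormedField 𝕜]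
    [NormedAddCommGroup F] [NormedSpace 𝕜 F] {f : 𝕜 → F} {f' : F} {x : 𝕜} {s : Set 𝕜} {c : F}
    (hf : HasDerivAt f f' x) (hx : AccPt x (𝓟 s)) (hs : EqOn f (fun _ => c) s) : f' = 0 := by
  by_contra hf'
  have hne := hf.eventually_ne (c := c) hf'
  obtain ⟨y, hy, hys⟩ := ((accPt_iff_frequently_nhdsNE.1 hx).and_eventually hne).exists
  exact hys (hs hy)

theorem HasDerivAt.eq_zero_of_accPt_of_sin_eq_zero {g : ℝ → ℝ} {d x : ℝ} {s : Set ℝ}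
    (hg : HasDerivAt g d x) (hx : AccPt x (𝓟 s)) (hxs : x ∈ s)
    (hs : ∀ y ∈ s, Real.sin (2 * Real.pi * g y) = 0) : d = 0 := by
  have hsin := (Real.hasDerivAt_sin _).comp x (hg.const_mul (2 * Real.pi))
  have hcos : Real.cos (2 * Real.pi * g x) ≠ 0 := by
    intro hc
    simpa [hs x hxs, hc] using Real.sin_sq_add_cos_sq (2 * Real.pi * g x)
  have := hsin.eq_zero_of_accPt_of_eqOn_const hx hs
  simpa [hcos, Real.pi_ne_zero] using this

variable {n : ℕ} {u u' : ℝ → Euc n} {a b : ℝ}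

theorem IsH1On.ae_hasDerivAt (hu : IsH1On u u' a b) :
    ∀ᵐ t, t ∈ Ioo a b → HasDerivAt u (u' t) t := by
  filter_upwards [hu.1.ae_hasDerivAt_integral] with t ht htab
  have hmem : t ∈ uIcc a b := Icc_subset_uIcc (Ioo_subset_Icc_self htab)
  refine ((ht hmem a left_mem_uIcc).const_add (u a)).congr_of_eventuallyEq ?_
  filter_upwards [Ioo_mem_nhds htab.1 htab.2] with s hs
  exact hu.2.2 s (Ioo_subset_Icc_self hs)

theorem IsH1On.ae_apply_eq_zero_of_sin_eq_zero (hu : IsH1On u u' a b) (i : Fin n) :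
    ∀ᵐ t, t ∈ Ioo a b → Real.sin (2 * Real.pi * u t i) = 0 → u' t i = 0 := by
  set S := {t ∈ Ioo a b | Real.sin (2 * Real.pi * u t i) = 0}
  filter_upwards [hu.ae_hasDerivAt, ae_accPt_of_mem volume S] with t hder hacc ht hsin
  have hderi : HasDerivAt (fun s => u s i) (u' t i) t :=
    (EuclideanSpace.proj (𝕜 := ℝ) i).hasFDerivAt.comp_hasDerivAt t (hder ht)
  exact hderi.eq_zero_of_accPt_of_sin_eq_zero (hacc ⟨ht, hsin⟩) ⟨ht, hsin⟩ fun s hs => hs.2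

theorem IsH1On.intervalIntegrable_apply (hu : IsH1On u u' a b) (i : Fin n) :
    IntervalIntegrable (fun t => u' t i) volume a b :=
  ⟨(EuclideanSpace.proj (𝕜 := ℝ) i).integrableOn_comp hu.1.1,
    (EuclideanSpace.proj (𝕜 := ℝ) i).integrableOn_comp hu.1.2⟩

theorem IsH1On.abs_apply_sub_le (hu : IsH1On u u' a b) (hab : a ≤ b) (i : Fin n) :
    |u b i - u a i| ≤ ∫ t in a..b, |u' t i| := by
  have hproj := (EuclideanSpace.proj (𝕜 := ℝ) i).intervalIntegral_comp_comm hu.1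
  have : u b i - u a i = ∫ t in a..b, u' t i := by
    rw [hu.2.2 b ⟨hab, le_rfl⟩]
    simpa using hproj.symm
  rw [this]
  exact abs_integral_le_integral_abs hab

theorem abs_add_abs_le_norm_of_apply_eq_zero {v : Euc 2} (hv : v 0 = 0 ∨ v 1 = 0) :
    |v 0| + |v 1| ≤ ‖v‖ := by
  rcases hv with h | h <;> simpa [h] using PiLp.norm_apply_le v _

theorem IsH1On.ae_abs_add_abs_le_norm_of_mem_gridG {γ γ' : ℝ → Euc 2} (hγ : IsH1On γ γ' a b)
    (hmem : ∀ t ∈ Icc a b, γ t ∈ gridG) :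
    ∀ᵐ t ∂volume.restrict (Icc a b), |γ' t 0| + |γ' t 1| ≤ ‖γ' t‖ := by
  rw [← Measure.restrict_congr_set Ioo_ae_eq_Icc, ae_restrict_iff' measurableSet_Ioo]
  filter_upwards [hγ.ae_apply_eq_zero_of_sin_eq_zero 0, hγ.ae_apply_eq_zero_of_sin_eq_zero 1]
    with t h0 h1 ht
  refine abs_add_abs_le_norm_of_apply_eq_zero ?_
  rcases mul_eq_zero.1 (hmem t (Ioo_subset_Icc_self ht)) with h | h
  exacts [Or.inl (h0 ht h), Or.inr (h1 ht h)]

/-- A curve lying in the grid `G` has length at least the `ℓ¹` distance between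
its endpoints. -/
theorem length_ge_l1_of_mem_grid
    (T : ℝ) (hT : 0 < T) (γ γ' : ℝ → Euc 2) (hγ : IsH1On γ γ' 0 T)
    (hmem : ∀ t ∈ Set.Icc (0 : ℝ) T, γ t ∈ gridG) :
    |γ T 0 - γ 0 0| + |γ T 1 - γ 0 1| ≤ ∫ t in (0 : ℝ)..T, ‖γ' t‖ := by
  have habs (i : Fin 2) : IntervalIntegrable (fun t => |γ' t i|) volume 0 T :=
    (hγ.intervalIntegrable_apply i).abs
  calc |γ T 0 - γ 0 0| + |γ T 1 - γ 0 1|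
      ≤ (∫ t in (0 : ℝ)..T, |γ' t 0|) + ∫ t in (0 : ℝ)..T, |γ' t 1| :=
        add_le_add (hγ.abs_apply_sub_le hT.le 0) (hγ.abs_apply_sub_le hT.le 1)
    _ = ∫ t in (0 : ℝ)..T, (|γ' t 0| + |γ' t 1|) := (integral_add (habs 0) (habs 1)).symm
    _ ≤ ∫ t in (0 : ℝ)..T, ‖γ' t‖ :=
        integral_mono_ae_restrict hT.le ((habs 0).add (habs 1)) hγ.1.norm
          (hγ.ae_abs_add_abs_le_norm_of_mem_gridG hmem)
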